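/- At any optimal solution of the bandwidth subproblem, the relay rate-balance constraint is tight: Γ_SU + Γ_CU = (μ1·B_{S2R}/Q)·ε(r̂), equivalently B_{S2R} = Q·(Γ_SU + Γ_CU)/(μ1·ε(r̂)). Formally: if Γ_SU + Γ_CU < (μ1·B_{S2R}/Q)·ε(r̂) strictly, then there exists δ > 0 such that transferring bandwidth δ from the satellite link to a user link produces a feasible point with strictly larger objective, contradicting optimality. -/

import Mathlib

lemma sum_update_aux (m : ℕ) (f : Fin m → ℝ) (i : Fin m) (v : ℝ) :
    ∑ j, Function.update f i v j = ∑ j, f j + (v - f i) := by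
  rw [Finset.sum_update_of_mem (Finset.mem_univ i)]
  have h := Finset.sum_eq_sum_sdiff_singleton_add (Finset.mem_univ i) f
  linarith

lemma key_mono (a : ℝ) (ha : 0 < a) :
    StrictMonoOn (fun b : ℝ => b * Real.log (1 + a / b)) (Set.Ioi 0) := by
  apply strictMonoOn_of_deriv_pos (convex_Ioi 0)
  · apply ContinuousOn.mul continuousOn_id
    apply ContinuousOn.log
    · exact continuousOn_const.add (continuousOn_const.div continuousOn_id
        (fun x hx => ne_of_gt hx))
    · intro x hx
      have hx : (0:ℝ) < x := hx
      positivity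
  · intro x hx
    rw [interior_Ioi] at hx
    have hx : (0:ℝ) < x := hx
    have hne : x ≠ 0 := ne_of_gt hx
    have hpos : 0 < 1 + a / x := by positivity
    have h1 : HasDerivAt (fun b : ℝ => 1 + a / b) (a * (-(x^2)⁻¹)) x := by
      simpa [div_eq_mul_inv] using ((hasDerivAt_inv hne).const_mul a).const_add 1
    have h2 : HasDerivAt (fun b : ℝ => Real.log (1 + a / b))
        ((a * (-(x^2)⁻¹)) / (1 + a / x)) x := h1.log (ne_of_gt hpos)
    have h3 : HasDerivAt (fun b : ℝ => b * Real.log (1 + a / b))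
        (1 * Real.log (1 + a / x) + x * ((a * (-(x^2)⁻¹)) / (1 + a / x))) x :=
      (hasDerivAt_id x).mul h2
    rw [h3.deriv]
    have hlog : a / (x + a) < Real.log (1 + a / x) := by
      have h4 : Real.log ((1 + a / x)⁻¹) < (1 + a / x)⁻¹ - 1 := by
        apply Real.log_lt_sub_one_of_pos (by positivity)
        intro h
        rw [inv_eq_one] at h
        have h5 : a / x = 0 := by linarith
        have h6 : a / x > 0 := by positivity
        linarith
      rw [Real.log_inv] at h4
      have he : (1 + a / x)⁻¹ - 1 = -(a / (x + a)) := by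
        field_simp
        ring
      rw [he] at h4
      linarith
    have he2 : x * ((a * (-(x^2)⁻¹)) / (1 + a / x)) = -(a / (x + a)) := by
      field_simp
    rw [he2]
    linarith

lemma term_lt (a x y : ℝ) (ha : 0 < a) (hx : 0 < x) (hxy : x < y) :
    x * Real.logb 2 (1 + a / x) < y * Real.logb 2 (1 + a / y) := by
  have hlt := key_mono a ha (Set.mem_Ioi.mpr hx) (Set.mem_Ioi.mpr (hx.trans hxy)) hxy
  simp only at hlt
  have hlog2 : (0:ℝ) < Real.log 2 := Real.log_pos (by norm_num)
  have e1 : x * Real.logb 2 (1 + a / x) = (x * Real.log (1 + a / x)) / Real.log 2 := by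
    rw [Real.logb]; ring
  have e2 : y * Real.logb 2 (1 + a / y) = (y * Real.log (1 + a / y)) / Real.log 2 := by
    rw [Real.logb]; ring
  rw [e1, e2]
  gcongr

/-- If the relay rate-balance constraint is slack at a feasible point, then transferring a
small amount δ of bandwidth from the satellite link to some user link yields a feasible point
with a strictly larger objective; hence at any optimum the constraint is tight. -/
theorem stmt_15 (m : ℕ) (hm : 0 < m) (c P η : Fin m → ℝ)
    (hc : ∀ j, 0 < c j) (hP : ∀ j, 0 < P j) (hη : ∀ j, 0 < η j)
    (μ1 Q εhat Btil_R Btil_S : ℝ) (hμ1 : 0 < μ1) (hQ : 0 < Q) (hε : 0 < εhat)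
    (Bs : ℝ) (B : Fin m → ℝ) (hBs : 0 < Bs) (hBpos : ∀ j, 0 < B j)
    (htot : Bs + ∑ j, B j ≤ Btil_R) (hsat : Bs ≤ Btil_S)
    (hrelay : ∑ j, B j * η j ≤ μ1 * Bs / Q * εhat)
    (F : (Fin m → ℝ) → ℝ)
    (hF : F = fun b => ∑ j, b j * Real.logb 2 (1 + c j * P j / b j))
    (hslack : ∑ j, B j * η j < μ1 * Bs / Q * εhat) :
    ∃ j0 : Fin m, ∃ δ > 0, δ < Bs ∧
      (Bs - δ) + ∑ j, Function.update B j0 (B j0 + δ) j ≤ Btil_R ∧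
      Bs - δ ≤ Btil_S ∧
      ∑ j, Function.update B j0 (B j0 + δ) j * η j ≤ μ1 * (Bs - δ) / Q * εhat ∧
      F B < F (Function.update B j0 (B j0 + δ)) := by
  set j0 : Fin m := ⟨0, hm⟩
  set g : ℝ := μ1 * Bs / Q * εhat - ∑ j, B j * η j with hg
  have hgpos : 0 < g := by simp [hg]; linarith
  set K : ℝ := η j0 + μ1 * εhat / Q with hK
  have hKpos : 0 < K := by have := hη j0; positivity
  set δ : ℝ := min (Bs / 2) (g / (2 * K)) with hδ
  have hδpos : 0 < δ := lt_min (by linarith) (by positivity)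
  have hδBs : δ < Bs := lt_of_le_of_lt (min_le_left _ _) (by linarith)
  refine ⟨j0, δ, hδpos, hδBs, ?_, by linarith, ?_, ?_⟩
  · rw [sum_update_aux]; linarith
  · have h1 : ∑ j, Function.update B j0 (B j0 + δ) j * η j
        = ∑ j, B j * η j + δ * η j0 := by
      have h2 : (fun j => Function.update B j0 (B j0 + δ) j * η j)
          = Function.update (fun j => B j * η j) j0 ((B j0 + δ) * η j0) := by
        funext x
        by_cases hx : x = j0 <;> simp [Function.update, hx]
      rw [h2, sum_update_aux]; ring
    rw [h1]
    have hδle : δ ≤ g / (2 * K) := min_le_right _ _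
    have hδK : δ * K ≤ g / 2 := by
      have h3 : δ * K ≤ g / (2 * K) * K := mul_le_mul_of_nonneg_right hδle hKpos.le
      have h4 : g / (2 * K) * K = g / 2 := by field_simp
      linarith
    have h5 : μ1 * (Bs - δ) / Q * εhat = μ1 * Bs / Q * εhat - δ * (μ1 * εhat / Q) := by
      field_simp
    rw [h5]
    simp only [hK] at hδK
    nlinarith
  · rw [hF]
    apply Finset.sum_lt_sum
    · intro j _
      rcases eq_or_ne j j0 with hj | hj
      · rw [hj, Function.update_self]
        exact (term_lt (c j0 * P j0) (B j0) (B j0 + δ)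
          (by have := hc j0; have := hP j0; positivity) (hBpos j0) (by linarith)).le
      · rw [Function.update_of_ne hj]
    · refine ⟨j0, Finset.mem_univ j0, ?_⟩
      rw [Function.update_self]
      exact term_lt (c j0 * P j0) (B j0) (B j0 + δ)
        (by have := hc j0; have := hP j0; positivity) (hBpos j0) (by linarith)
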